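/- Let U ⊆ ℝ³ be open, ν : U → ℝ continuously differentiable with |∇ν(x)| = 1 for all x ∈ U, k a natural number, z ∈ ℂ with z ≠ 0, and g, f_ν : U → ℂ continuously differentiable. Define p = e^{−zν}·( P₃(zν)·g + P₁(zν)·f_ν ). Then on U one has ∇p = z·e^{−zν}·[ ( (zν)^k·f_ν + (P₃′ − P₃)(zν)·g )·∇ν + z^{−1}·( P₁(zν)·∇f_ν + P₃(zν)·∇g ) ]. -/

import Mathlib

/-!
Differentiate `p` by the product and chain rules. The derivative of `e^{−zν}` contributes
`−z∇ν` times the bracket, and differentiating `P(zν)` contributes `z P′(zν)∇ν`, so each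
polynomial `P` enters the `∇ν` term as `z (P′ − P)(zν)`. For `P₁` this is `z (zν)^k`, because
`P₁′ = P₁ + X^k` (the exponential series truncated at degree `k` loses its top term when
differentiated).
-/

open Polynomial

/-- Componentwise complexification of a real vector in `ℝ³`. -/
noncomputable def cV (v : EuclideanSpace ℝ (Fin 3)) : EuclideanSpace ℂ (Fin 3) :=
  WithLp.toLp 2 (fun i => (v i : ℂ))

/-- Gradient (vector of partial derivatives) of a complex-valued function on `ℝ³`. -/
noncomputable def gradC (f : EuclideanSpace ℝ (Fin 3) → ℂ)
    (x : EuclideanSpace ℝ (Fin 3)) : EuclideanSpace ℂ (Fin 3) :=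
  WithLp.toLp 2 (fun i => fderiv ℝ f x (EuclideanSpace.single i 1))

/-- The polynomial `P₁(X) = -k! · ∑_{j=0}^{k} X^j / j!` (over `ℂ`). -/
noncomputable def P₁ (k : ℕ) : Polynomial ℂ :=
  -(C (k.factorial : ℂ)) * ∑ j ∈ Finset.range (k + 1), C ((j.factorial : ℂ)⁻¹) * X ^ j

/-- The polynomial `P₃(X) = -k! · ∑_{j=0}^{k-1} (k-j+1) X^j / j!` (over `ℂ`, zero if `k = 0`). -/
noncomputable def P₃ (k : ℕ) : Polynomial ℂ :=
  -(C (k.factorial : ℂ)) *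
    ∑ j ∈ Finset.range k, C (((k : ℂ) - j + 1) * (j.factorial : ℂ)⁻¹) * X ^ j

theorem derivative_P₁ (k : ℕ) : derivative (P₁ k) = P₁ k + X ^ k := by
  have hsum : derivative (∑ j ∈ Finset.range (k + 1), C ((j.factorial : ℂ)⁻¹) * X ^ j)
      = ∑ j ∈ Finset.range k, C ((j.factorial : ℂ)⁻¹) * X ^ j := by
    rw [derivative_sum, Finset.sum_range_succ']
    simp only [derivative_C_mul_X_pow, Nat.cast_zero, mul_zero, C_0, zero_mul, add_zero,
      Nat.add_sub_cancel]
    refine Finset.sum_congr rfl fun j _ => ?_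
    have hj : (j : ℂ) + 1 ≠ 0 := Nat.cast_add_one_ne_zero j
    push_cast [Nat.factorial_succ]
    field_simp
  have hk : C (k.factorial : ℂ) * C (k.factorial : ℂ)⁻¹ = 1 := by
    rw [← C_mul, mul_inv_cancel₀ (Nat.cast_ne_zero.2 k.factorial_ne_zero), C_1]
  rw [P₁, derivative_mul, derivative_neg, derivative_C, neg_zero, zero_mul, zero_add, hsum,
    Finset.sum_range_succ]
  linear_combination X ^ k * hk

theorem hasFDerivAt_cexp_mul_eval_add_eval {E : Type*} [NormedAddCommGroup E] [NormedSpace ℝ E]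
    {ν : E → ℝ} {g f : E → ℂ} {ν' : E →L[ℝ] ℝ} {g' f' : E →L[ℝ] ℂ} {x : E}
    (hν : HasFDerivAt ν ν' x) (hg : HasFDerivAt g g' x) (hf : HasFDerivAt f f' x)
    (z : ℂ) (P Q : ℂ[X]) :
    HasFDerivAt
      (fun y => Complex.exp (-z * ν y) * (P.eval (z * ν y) * g y + Q.eval (z * ν y) * f y))
      (Complex.exp (-z * ν x) •
        ((z * ((derivative P - P).eval (z * ν x) * g x
            + (derivative Q - Q).eval (z * ν x) * f x)) • (Complex.ofRealCLM.comp ν')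
          + P.eval (z * ν x) • g' + Q.eval (z * ν x) • f')) x := by
  have hν_ℂ : HasFDerivAt (fun y => (ν y : ℂ)) (Complex.ofRealCLM.comp ν') x :=
    Complex.ofRealCLM.hasFDerivAt.comp x hν
  have hzν := hν_ℂ.const_mul z
  have hexp := (hν_ℂ.const_mul (-z)).cexp
  have hP := (P.hasDerivAt (z * ν x)).comp_hasFDerivAt x hzν
  have hQ := (Q.hasDerivAt (z * ν x)).comp_hasFDerivAt x hzν
  refine (hexp.mul ((hP.mul hg).add (hQ.mul hf))).congr_fderiv ?_
  ext v
  simp only [neg_mul, Function.comp_apply, smul_add, Pi.add_apply, Pi.mul_apply, add_apply,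
    smul_apply, smul_eq_mul, ContinuousLinearMap.comp_apply, Complex.ofRealCLM_apply, mul_neg,
    eval_sub]
  ring

theorem EuclideanSpace.gradient_apply {ι : Type*} [Fintype ι] [DecidableEq ι]
    (f : EuclideanSpace ℝ ι → ℝ) (x : EuclideanSpace ℝ ι) (i : ι) :
    gradient f x i = fderiv ℝ f x (EuclideanSpace.single i 1) := by
  rw [← InnerProductSpace.toDual_symm_apply, EuclideanSpace.inner_single_right]
  simp [gradient]

noncomputable def partialsVec {ι : Type*} [Fintype ι] [DecidableEq ι] :
    (EuclideanSpace ℝ ι →L[ℝ] ℂ) →ₗ[ℂ] EuclideanSpace ℂ ι where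
  toFun L := WithLp.toLp 2 (fun i => L (EuclideanSpace.single i 1))
  map_add' L M := by ext; simp
  map_smul' c L := by ext; simp

theorem gradC_eq_partialsVec (f : EuclideanSpace ℝ (Fin 3) → ℂ) (x : EuclideanSpace ℝ (Fin 3)) :
    gradC f x = partialsVec (fderiv ℝ f x) := rfl

theorem partialsVec_ofRealCLM_comp_fderiv (ν : EuclideanSpace ℝ (Fin 3) → ℝ)
    (x : EuclideanSpace ℝ (Fin 3)) :
    partialsVec (Complex.ofRealCLM.comp (fderiv ℝ ν x)) = cV (gradient ν x) := by
  ext i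
  simp [partialsVec, cV, EuclideanSpace.gradient_apply]

theorem statement11_general
    (U : Set (EuclideanSpace ℝ (Fin 3))) (hU : IsOpen U)
    (ν : EuclideanSpace ℝ (Fin 3) → ℝ)
    (hν : ContDiffOn ℝ 1 ν U)
    (k : ℕ) (z : ℂ) (hz : z ≠ 0)
    (g fν : EuclideanSpace ℝ (Fin 3) → ℂ)
    (hg : ContDiffOn ℝ 1 g U) (hfν : ContDiffOn ℝ 1 fν U)
    (p : EuclideanSpace ℝ (Fin 3) → ℂ)
    (hp : ∀ y, p y = Complex.exp (-z * (ν y : ℂ)) *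
        ((P₃ k).eval (z * (ν y : ℂ)) * g y + (P₁ k).eval (z * (ν y : ℂ)) * fν y))
    (x : EuclideanSpace ℝ (Fin 3)) (hx : x ∈ U) :
    gradC p x
      = (z * Complex.exp (-z * (ν x : ℂ))) •
          (((z * (ν x : ℂ)) ^ k * fν x
              + (derivative (P₃ k) - P₃ k).eval (z * (ν x : ℂ)) * g x) • cV (gradient ν x)
            + z⁻¹ • ((P₁ k).eval (z * (ν x : ℂ)) • gradC fν x
                + (P₃ k).eval (z * (ν x : ℂ)) • gradC g x)) := by
  have hxU := hU.mem_nhds hx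
  have hνx := (hν.contDiffAt hxU).differentiableAt one_ne_zero
  have hgx := (hg.contDiffAt hxU).differentiableAt one_ne_zero
  have hfx := (hfν.contDiffAt hxU).differentiableAt one_ne_zero
  have hpx := hasFDerivAt_cexp_mul_eval_add_eval hνx.hasFDerivAt hgx.hasFDerivAt
    hfx.hasFDerivAt z (P₃ k) (P₁ k)
  rw [gradC_eq_partialsVec, show p = _ from funext hp, hpx.fderiv]
  simp only [map_add, map_smul, partialsVec_ofRealCLM_comp_fderiv, ← gradC_eq_partialsVec,
    derivative_P₁, add_sub_cancel_left, eval_pow, eval_X]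
  linear_combination (norm := module) (-Complex.exp (-z * ν x) * mul_inv_cancel₀ hz) •
    ((P₁ k).eval (z * ν x) • gradC fν x + (P₃ k).eval (z * ν x) • gradC g x)

/-- let `ν` be `C¹` on the open `U` with `|∇ν| = 1`, `k ∈ ℕ`, `z ≠ 0`,
`g, f_ν : U → ℂ` of class `C¹`, and `p = e^{−zν}·(P₃(zν)·g + P₁(zν)·f_ν)`. Then on `U`:
`∇p = z·e^{−zν}·[((zν)^k·f_ν + (P₃′ − P₃)(zν)·g)·∇ν + z^{−1}·(P₁(zν)·∇f_ν + P₃(zν)·∇g)]`. -/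
theorem statement11
    (U : Set (EuclideanSpace ℝ (Fin 3))) (hU : IsOpen U)
    (ν : EuclideanSpace ℝ (Fin 3) → ℝ)
    (hν : ContDiffOn ℝ 1 ν U)
    (hgrad : ∀ x ∈ U, ‖gradient ν x‖ = 1)
    (k : ℕ) (z : ℂ) (hz : z ≠ 0)
    (g fν : EuclideanSpace ℝ (Fin 3) → ℂ)
    (hg : ContDiffOn ℝ 1 g U) (hfν : ContDiffOn ℝ 1 fν U)
    (p : EuclideanSpace ℝ (Fin 3) → ℂ)
    (hp : ∀ y, p y = Complex.exp (-z * (ν y : ℂ)) *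
        ((P₃ k).eval (z * (ν y : ℂ)) * g y + (P₁ k).eval (z * (ν y : ℂ)) * fν y))
    (x : EuclideanSpace ℝ (Fin 3)) (hx : x ∈ U) :
    gradC p x
      = (z * Complex.exp (-z * (ν x : ℂ))) •
          (((z * (ν x : ℂ)) ^ k * fν x
              + (derivative (P₃ k) - P₃ k).eval (z * (ν x : ℂ)) * g x) • cV (gradient ν x)
            + z⁻¹ • ((P₁ k).eval (z * (ν x : ℂ)) • gradC fν x
                + (P₃ k).eval (z * (ν x : ℂ)) • gradC g x)) :=
  statement11_general U hU ν hν k z hz g fν hg hfν p hp x hx
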